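/- arXiv:1811.06845 — 5 statements merged into one kernel-verified Lean document; each statement's English description precedes it below -/
import Mathlib

section
/- Let X be a random variable on ℝ with distribution P satisfying P = (1/3)(P∘S₁⁻¹ + P∘S₂⁻¹ + P∘S₃⁻¹), where Sⱼ(x) = r·x + ((j−1)/2)(1−r) for 0 < r < 1/3. Then Var(X) = (1−r)/(6(r+1)). -/
open MeasureTheory
open scoped ENNReal

/-- The similarity mappings `S_j(x) = r x + ((j-1)/2)(1-r)`, indexed by `j : Fin 3`
(so `j = 0, 1, 2` corresponds to `j = 1, 2, 3` in the paper). -/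
noncomputable def Smap (r : ℝ) (j : Fin 3) (x : ℝ) : ℝ := r * x + (j : ℝ) / 2 * (1 - r)

/-!
If `ψ ∘ S_j ≤ r ψ` for every `j`, self-similarity gives `P {ψ > t} ≤ P {ψ > t / rⁿ}`, which
tends to `0`. The signed distance `ψ x = |x - 1/2| - 1/2` to `[0, 1]` is such a `ψ`, so `P` has
bounded support and `X` is square integrable. Integrating `x` and `x²` against the invariance
equation, with `S_j x = r x + b_j`, gives `m = r m + E b` and `E X² = r² E X² + 2 r m E b + E b²`,
whence `(1 - r²) Var X = Var b`, where `b` is uniform on `{0, (1 - r)/2, 1 - r}`.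
-/

open Finset ProbabilityTheory

section Invariant

variable {α ι : Type*} [MeasurableSpace α] [Fintype ι] {μ : Measure α} {w : ι → ℝ≥0∞}
  {f : ι → α → α}

theorem measure_eq_sum_measure_preimage (h : μ = ∑ i, w i • μ.map (f i))
    (hf : ∀ i, Measurable (f i)) {s : Set α} (hs : MeasurableSet s) :
    μ s = ∑ i, w i * μ (f i ⁻¹' s) := by
  conv_lhs => rw [h]
  simp only [Measure.finsetSum_apply, Measure.smul_apply, Measure.map_apply (hf _) hs,
    smul_eq_mul]

theorem integral_eq_sum_integral_comp {E : Type*} [NormedAddCommGroup E] [NormedSpace ℝ E]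
    (h : μ = ∑ i, w i • μ.map (f i)) (hf : ∀ i, Measurable (f i)) {g : α → E}
    (hg : StronglyMeasurable g) (hgi : Integrable g μ) :
    ∫ x, g x ∂μ = ∑ i, (w i).toReal • ∫ x, g (f i x) ∂μ := by
  rw [h] at hgi
  conv_lhs => rw [h]
  rw [integral_finsetSum_measure fun i _ ↦ integrable_finsetSum_measure.mp hgi i (mem_univ i)]
  simp only [integral_smul_measure, integral_map (hf _).aemeasurable hg.aestronglyMeasurable]

variable {ψ : α → ℝ} {r : ℝ}

theorem measure_lt_le_measure_div_lt (h : μ = ∑ i, w i • μ.map (f i))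
    (hf : ∀ i, Measurable (f i)) (hw : ∑ i, w i = 1) (hψ : Measurable ψ) (hr : 0 < r)
    (hψf : ∀ i x, ψ (f i x) ≤ r * ψ x) (t : ℝ) :
    μ {x | t < ψ x} ≤ μ {x | t / r < ψ x} :=
  calc μ {x | t < ψ x} = ∑ i, w i * μ (f i ⁻¹' {x | t < ψ x}) :=
        measure_eq_sum_measure_preimage h hf (measurableSet_lt measurable_const hψ)
    _ ≤ ∑ i, w i * μ {x | t / r < ψ x} := by
        gcongr with i _
        intro x (hx : t < ψ (f i x))
        exact (div_lt_iff₀' hr).2 (hx.trans_le (hψf i x))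
    _ = μ {x | t / r < ψ x} := by rw [← sum_mul, hw, one_mul]

theorem measure_lt_le_measure_div_pow_lt (h : μ = ∑ i, w i • μ.map (f i))
    (hf : ∀ i, Measurable (f i)) (hw : ∑ i, w i = 1) (hψ : Measurable ψ) (hr : 0 < r)
    (hψf : ∀ i x, ψ (f i x) ≤ r * ψ x) (t : ℝ) (n : ℕ) :
    μ {x | t < ψ x} ≤ μ {x | t / r ^ n < ψ x} := by
  induction n with
  | zero => simp
  | succ n ih =>
    rw [pow_succ, ← div_div]
    exact ih.trans (measure_lt_le_measure_div_lt h hf hw hψ hr hψf _)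

theorem ae_le_of_eq_sum_map_of_le_mul [IsFiniteMeasure μ] (h : μ = ∑ i, w i • μ.map (f i))
    (hf : ∀ i, Measurable (f i)) (hw : ∑ i, w i = 1) (hψ : Measurable ψ) (hr0 : 0 < r)
    (hr1 : r < 1) (hψf : ∀ i x, ψ (f i x) ≤ r * ψ x) {t : ℝ} (ht : 0 < t) :
    ∀ᵐ x ∂μ, ψ x ≤ t := by
  have hanti : Antitone fun n : ℕ ↦ {x | t / r ^ n < ψ x} := fun m n hmn x hx ↦
    lt_of_le_of_lt (div_le_div_of_nonneg_left ht.le (pow_pos hr0 n)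
      (pow_le_pow_of_le_one hr0.le hr1.le hmn)) hx
  have hempty : ⋂ n : ℕ, {x | t / r ^ n < ψ x} = ∅ := by
    refine Set.iInter_eq_empty_iff.2 fun x ↦ ?_
    obtain ⟨n, hn⟩ := pow_unbounded_of_one_lt (ψ x / t) (one_lt_inv₀ hr0 |>.2 hr1)
    rw [div_lt_iff₀ ht, inv_pow, ← div_eq_inv_mul] at hn
    exact ⟨n, not_lt.2 hn.le⟩
  rw [ae_iff]
  simp only [not_le]
  refine le_antisymm ?_ bot_le
  calc μ {x | t < ψ x} ≤ ⨅ n : ℕ, μ {x | t / r ^ n < ψ x} :=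
        le_iInf (measure_lt_le_measure_div_pow_lt h hf hw hψ hr0 hψf t)
    _ = 0 := by
      rw [← hanti.measure_iInter
        (fun n ↦ (measurableSet_lt measurable_const hψ).nullMeasurableSet)
        ⟨0, measure_ne_top μ _⟩, hempty, measure_empty]

end Invariant

section Affine

variable {μ : Measure ℝ} [IsProbabilityMeasure μ] (r c : ℝ)

theorem integral_mul_add (hint : Integrable (fun x ↦ x) μ) :
    ∫ x, (r * x + c) ∂μ = r * ∫ x, x ∂μ + c := by
  rw [integral_add (hint.const_mul r) (integrable_const c), integral_const_mul, integral_const,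
    probReal_univ, one_smul]

theorem integral_mul_add_sq (hint : Integrable (fun x ↦ x) μ)
    (hint2 : Integrable (fun x ↦ x ^ 2) μ) :
    ∫ x, (r * x + c) ^ 2 ∂μ = r ^ 2 * ∫ x, x ^ 2 ∂μ + 2 * r * c * ∫ x, x ∂μ + c ^ 2 := by
  have hpoly : (fun x ↦ (r * x + c) ^ 2) = fun x ↦ r ^ 2 * x ^ 2 + 2 * r * c * x + c ^ 2 := by
    ext x; ring
  have hquad : Integrable (fun x ↦ r ^ 2 * x ^ 2 + 2 * r * c * x) μ :=
    (hint2.const_mul _).add (hint.const_mul _)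
  rw [hpoly, integral_add hquad (integrable_const _),
    integral_add (hint2.const_mul _) (hint.const_mul _), integral_const_mul, integral_const_mul,
    integral_const, probReal_univ, one_smul]

end Affine

theorem variance_id_of_eq_sum_map_affine {ι : Type*} [Fintype ι] {μ : Measure ℝ}
    [IsProbabilityMeasure μ] {w : ι → ℝ≥0∞} {r : ℝ} {b : ι → ℝ}
    (h : μ = ∑ i, w i • μ.map (fun x ↦ r * x + b i)) (hw : ∑ i, w i = 1)
    (hμ : MemLp (fun x ↦ x) 2 μ) (hr : r ^ 2 ≠ 1) :
    variance (fun x ↦ x) μ =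
      (∑ i, (w i).toReal * b i ^ 2 - (∑ i, (w i).toReal * b i) ^ 2) / (1 - r ^ 2) := by
  have hf : ∀ i, Measurable fun x ↦ r * x + b i := fun i ↦ by fun_prop
  have hint : Integrable (fun x ↦ x) μ := hμ.integrable one_le_two
  have hint2 : Integrable (fun x ↦ x ^ 2) μ := hμ.integrable_sq
  have hw' : ∑ i, (w i).toReal = 1 := by
    rw [← ENNReal.toReal_sum (ENNReal.sum_ne_top.1 (hw ▸ ENNReal.one_ne_top)), hw,
      ENNReal.toReal_one]
  set m := ∫ x, x ∂μ
  set m2 := ∫ x, x ^ 2 ∂μ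
  have hmean : m = r * m + ∑ i, (w i).toReal * b i := by
    have hm : m = ∑ i, (w i).toReal * ∫ x, (r * x + b i) ∂μ :=
      integral_eq_sum_integral_comp h hf (g := fun x ↦ x) stronglyMeasurable_id hint
    simp only [integral_mul_add _ _ hint, mul_add, sum_add_distrib, ← sum_mul, hw',
      one_mul] at hm
    linear_combination hm
  have hsq : m2 = r ^ 2 * m2 + 2 * r * m * ∑ i, (w i).toReal * b i
      + ∑ i, (w i).toReal * b i ^ 2 := by
    have hm2 : m2 = ∑ i, (w i).toReal * ∫ x, (r * x + b i) ^ 2 ∂μ :=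
      integral_eq_sum_integral_comp h hf (g := fun x ↦ x ^ 2)
        (stronglyMeasurable_id.pow 2) hint2
    simp only [integral_mul_add_sq _ _ hint hint2, mul_add, sum_add_distrib, ← sum_mul, hw',
      one_mul] at hm2
    have hcross :
        ∑ i, (w i).toReal * (2 * r * b i * m) = 2 * r * m * ∑ i, (w i).toReal * b i := by
      rw [mul_sum]
      exact sum_congr rfl fun i _ ↦ by ring
    linear_combination hm2 + hcross
  rw [variance_eq_sub hμ, eq_div_iff (sub_ne_zero.2 hr.symm)]
  simp only [Pi.pow_apply]
  linear_combination hsq + (-(1 + r) * m - ∑ i, (w i).toReal * b i) * hmean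

theorem abs_Smap_sub_half_sub_half_le {r : ℝ} (hr0 : 0 ≤ r) (hr1 : r ≤ 1) (j : Fin 3)
    (x : ℝ) :
    |Smap r j x - 1 / 2| - 1 / 2 ≤ r * (|x - 1 / 2| - 1 / 2) := by
  have hshift : |((j : ℝ) - 1) / 2 * (1 - r)| ≤ (1 - r) / 2 := by
    rw [abs_mul, abs_of_nonneg (sub_nonneg.2 hr1), abs_div, abs_two]
    have : |(j : ℝ) - 1| ≤ 1 := by fin_cases j <;> norm_num
    nlinarith
  calc |Smap r j x - 1 / 2| - 1 / 2
      = |r * (x - 1 / 2) + ((j : ℝ) - 1) / 2 * (1 - r)| - 1 / 2 := by unfold Smap; ring_nf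
    _ ≤ r * |x - 1 / 2| + (1 - r) / 2 - 1 / 2 := by
      gcongr
      exact (abs_add_le _ _).trans (by rw [abs_mul, abs_of_nonneg hr0]; linarith)
    _ = r * (|x - 1 / 2| - 1 / 2) := by ring

theorem stmt_1 (r : ℝ) (hr0 : 0 < r) (hr1 : r < 1/3)
    (P : Measure ℝ) [IsProbabilityMeasure P]
    (hP : P = (3 : ℝ≥0∞)⁻¹ •
      (P.map (Smap r 0) + P.map (Smap r 1) + P.map (Smap r 2))) :
    ProbabilityTheory.variance (fun x => x) P = (1 - r) / (6 * (r + 1)) := by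
  have hr1' : r < 1 := by linarith
  have hinv : P = ∑ j, (3 : ℝ≥0∞)⁻¹ • P.map (Smap r j) := by
    rwa [Fin.sum_univ_three, ← smul_add, ← smul_add]
  have hw : ∑ _j : Fin 3, (3 : ℝ≥0∞)⁻¹ = 1 := by
    rw [sum_const, card_univ, Fintype.card_fin, nsmul_eq_mul, Nat.cast_ofNat,
      ENNReal.mul_inv_cancel (by norm_num) (by norm_num)]
  have hSmap : ∀ j, Measurable (Smap r j) := fun j ↦ by unfold Smap; fun_prop
  have hbdd : ∀ᵐ x ∂P, |x - 1 / 2| - 1 / 2 ≤ 1 :=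
    ae_le_of_eq_sum_map_of_le_mul hinv hSmap hw (by fun_prop) hr0 hr1'
      (abs_Smap_sub_half_sub_half_le hr0.le hr1'.le) one_pos
  have hL2 : MemLp (fun x ↦ x) 2 P :=
    .of_bound aestronglyMeasurable_id 2 <| hbdd.mono fun x hx ↦ by
      rw [Real.norm_eq_abs, abs_le]
      constructor <;> linarith [le_abs_self (x - 1 / 2), neg_abs_le (x - 1 / 2)]
  have hr2 : r ^ 2 < 1 := by nlinarith
  rw [variance_id_of_eq_sum_map_affine (b := fun j : Fin 3 ↦ (j : ℝ) / 2 * (1 - r)) hinv hw hL2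
    hr2.ne, div_eq_div_iff (sub_pos.2 hr2).ne' (by positivity)]
  simp only [Fin.sum_univ_three]
  norm_num
  ring
end

section
/- Let P be the self-similar probability measure with P = (1/3)(P∘S₁⁻¹ + P∘S₂⁻¹ + P∘S₃⁻¹), Sⱼ(x) = r·x + ((j−1)/2)(1−r), 0 < r < 1/3. For every x₀ ∈ ℝ, ∫(x−x₀)² dP(x) = (1−r)/(6(r+1)) + (x₀ − 1/2)². -/
/-!
Pushing the invariance equation through the tail sets `{x | t < |x - 1/2| - 1/2}` shows that
their measure does not decrease when `t` grows by `1` (each `S_j` contracts the distance to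
`[0, 1]` by the factor `r`), so it vanishes: `P` has bounded support and all moments are finite.
Writing `S_j x - 1/2 = r (x - 1/2) + d_j` with `∑ d_j = 0`, the invariance equation applied to
`x - 1/2` and to `(x - 1/2)²` gives a mean of `1/2` and `V = r² V + (1 - r)² / 6`; the claim is
then the parallel-axis formula.
-/

open MeasureTheory
open scoped ENNReal

theorem measure_setOf_lt_eq_zero_of_le_add_one {α : Type*} [MeasurableSpace α] {μ : Measure α}
    [IsFiniteMeasure μ] {g : α → ℝ} (hg : Measurable g) {a : ℝ}
    (h : ∀ t ≥ a, μ {x | t < g x} ≤ μ {x | t + 1 < g x}) : μ {x | a < g x} = 0 := by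
  set s : ℕ → Set α := fun n ↦ {x | a + n < g x}
  have hle : ∀ n : ℕ, μ {x | a < g x} ≤ μ (s n) := by
    intro n
    induction n with
    | zero => simp [s]
    | succ n ih =>
      refine ih.trans ?_
      simpa [s, add_assoc] using h (a + n) (by simp)
  have hanti : Antitone s := fun m n hmn x (hx : a + n < g x) ↦
    show a + m < g x from lt_of_le_of_lt (by simpa using hmn) hx
  have hempty : ⋂ n, s n = ∅ := by
    refine Set.eq_empty_of_forall_notMem fun x hx ↦ ?_
    obtain ⟨n, hn⟩ := exists_nat_gt (g x - a)
    have hxn : a + n < g x := Set.mem_iInter.mp hx n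
    linarith
  have hinf : ⨅ n, μ (s n) = 0 := by
    rw [← hanti.measure_iInter (fun n ↦ (measurableSet_lt measurable_const hg).nullMeasurableSet)
      ⟨0, measure_ne_top μ _⟩, hempty, measure_empty]
  exact le_antisymm (hinf ▸ le_iInf hle) zero_le

theorem integral_mul_add_s2 {Ω : Type*} [MeasurableSpace Ω] {μ : Measure Ω} [IsProbabilityMeasure μ]
    {X : Ω → ℝ} (hX : Integrable X μ) (a b : ℝ) :
    ∫ ω, (a * X ω + b) ∂μ = a * ∫ ω, X ω ∂μ + b := by
  rw [integral_add (hX.const_mul a) (integrable_const b), integral_const_mul, integral_const,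
    probReal_univ, one_smul]

theorem integral_mul_add_sq_s2 {Ω : Type*} [MeasurableSpace Ω] {μ : Measure Ω}
    [IsProbabilityMeasure μ] {X : Ω → ℝ} (hX : Integrable X μ)
    (hX2 : Integrable (fun ω ↦ X ω ^ 2) μ) (a b : ℝ) :
    ∫ ω, (a * X ω + b) ^ 2 ∂μ = a ^ 2 * ∫ ω, X ω ^ 2 ∂μ + 2 * a * b * ∫ ω, X ω ∂μ + b ^ 2 := by
  have hexp : ∀ ω, (a * X ω + b) ^ 2 = (a ^ 2 * X ω ^ 2 + 2 * a * b * X ω) + b ^ 2 :=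
    fun ω ↦ by ring
  have hquad : Integrable (fun ω ↦ a ^ 2 * X ω ^ 2 + 2 * a * b * X ω) μ :=
    (hX2.const_mul _).add (hX.const_mul _)
  simp_rw [hexp]
  rw [integral_add hquad (integrable_const _),
    integral_add (hX2.const_mul _) (hX.const_mul _), integral_const_mul, integral_const_mul,
    integral_const, probReal_univ, one_smul]

namespace Smap

theorem measurable (r : ℝ) (j : Fin 3) : Measurable (Smap r j) :=
  (measurable_id.const_mul r).add_const _

theorem continuous (r : ℝ) (j : Fin 3) : Continuous (Smap r j) := by
  unfold Smap; fun_prop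

noncomputable def offset (r : ℝ) (j : Fin 3) : ℝ := ((j : ℝ) - 1) / 2 * (1 - r)

theorem sub_half (r : ℝ) (j : Fin 3) (x : ℝ) :
    Smap r j x - 1 / 2 = r * (x - 1 / 2) + offset r j := by
  unfold Smap offset; ring

theorem sum_offset (r : ℝ) : offset r 0 + offset r 1 + offset r 2 = 0 := by
  norm_num [offset]

theorem sum_offset_sq (r : ℝ) :
    offset r 0 ^ 2 + offset r 1 ^ 2 + offset r 2 ^ 2 = (1 - r) ^ 2 / 2 := by
  norm_num [offset]; ring

theorem abs_offset_le {r : ℝ} (hr : r ≤ 1) (j : Fin 3) : |offset r j| ≤ (1 - r) / 2 := by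
  fin_cases j <;> norm_num [offset, abs_mul, abs_of_nonneg (sub_nonneg.2 hr)] <;> linarith

/-- Off `[0, 1]`, `|x - 1/2| - 1/2` is the distance to `[0, 1]`, which `S_j` contracts. -/
theorem abs_sub_half_sub_half_le {r : ℝ} (hr0 : 0 ≤ r) (hr1 : r ≤ 1) (j : Fin 3) (x : ℝ) :
    |Smap r j x - 1 / 2| - 1 / 2 ≤ r * (|x - 1 / 2| - 1 / 2) := by
  rw [sub_half]
  calc |r * (x - 1 / 2) + offset r j| - 1 / 2
      ≤ |r * (x - 1 / 2)| + |offset r j| - 1 / 2 := by gcongr; exact abs_add_le _ _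
    _ ≤ r * |x - 1 / 2| + (1 - r) / 2 - 1 / 2 := by
      rw [abs_mul, abs_of_nonneg hr0]; gcongr; exact abs_offset_le hr1 j
    _ = r * (|x - 1 / 2| - 1 / 2) := by ring

end Smap

def IsSmapInvariant (r : ℝ) (P : Measure ℝ) : Prop :=
  P = (3 : ℝ≥0∞)⁻¹ • (P.map (Smap r 0) + P.map (Smap r 1) + P.map (Smap r 2))

namespace IsSmapInvariant

variable {r : ℝ} {P : Measure ℝ}

theorem measure_eq (hP : IsSmapInvariant r P) {A : Set ℝ} (hA : MeasurableSet A) :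
    P A = 3⁻¹ * (P (Smap r 0 ⁻¹' A) + P (Smap r 1 ⁻¹' A) + P (Smap r 2 ⁻¹' A)) := by
  conv_lhs => rw [hP]
  simp only [Measure.smul_apply, Measure.add_apply, smul_eq_mul,
    Measure.map_apply (Smap.measurable r _) hA]

theorem measure_le_of_preimage_subset (hP : IsSmapInvariant r P) {A B : Set ℝ}
    (hA : MeasurableSet A) (hAB : ∀ j, Smap r j ⁻¹' A ⊆ B) : P A ≤ P B := by
  rw [hP.measure_eq hA]
  calc 3⁻¹ * (P (Smap r 0 ⁻¹' A) + P (Smap r 1 ⁻¹' A) + P (Smap r 2 ⁻¹' A))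
      ≤ 3⁻¹ * (P B + P B + P B) := by gcongr <;> exact hAB _
    _ = P B := by
      rw [show P B + P B + P B = 3 * P B by ring,
        ENNReal.inv_mul_cancel_left (by norm_num) (by norm_num)]

theorem measure_abs_sub_half_gt_eq_zero (hP : IsSmapInvariant r P) [IsFiniteMeasure P]
    (hr0 : 0 < r) (hr1 : r < 1) : P {x | r / (1 - r) < |x - 1 / 2| - 1 / 2} = 0 := by
  refine measure_setOf_lt_eq_zero_of_le_add_one (by fun_prop) fun t ht ↦ ?_
  refine hP.measure_le_of_preimage_subset (measurableSet_lt measurable_const (by fun_prop))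
    fun j x hx ↦ ?_
  have hcontract := Smap.abs_sub_half_sub_half_le hr0.le hr1.le j x
  have hstep : r * (t + 1) ≤ t := by
    rw [ge_iff_le, div_le_iff₀ (by linarith)] at ht; linarith
  simp only [Set.mem_preimage, Set.mem_ofPred_eq] at hx ⊢
  by_contra! hle
  nlinarith [mul_le_mul_of_nonneg_left hle hr0.le]

theorem integrable_of_continuous (hP : IsSmapInvariant r P) [IsFiniteMeasure P]
    (hr0 : 0 < r) (hr1 : r < 1) {f : ℝ → ℝ} (hf : Continuous f) : Integrable f P := by
  set c := 1 / 2 + r / (1 - r) with hc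
  have hsupp : ∀ᵐ x ∂P, x ∈ Set.Icc (1 / 2 - c) (1 / 2 + c) := by
    refine measure_eq_zero_iff_ae_notMem.mp (hP.measure_abs_sub_half_gt_eq_zero hr0 hr1) |>.mono
      fun x hx ↦ ?_
    simp only [Set.mem_ofPred_eq, not_lt] at hx
    have habs := abs_le.mp (show |x - 1 / 2| ≤ c by linarith)
    constructor <;> linarith [habs.1, habs.2]
  rw [← Measure.restrict_eq_self_of_ae_mem hsupp]
  exact hf.continuousOn.integrableOn_compact isCompact_Icc

theorem integral_eq (hP : IsSmapInvariant r P) [IsFiniteMeasure P] (hr0 : 0 < r) (hr1 : r < 1)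
    {f : ℝ → ℝ} (hf : Continuous f) :
    ∫ x, f x ∂P =
      3⁻¹ * (∫ x, f (Smap r 0 x) ∂P + ∫ x, f (Smap r 1 x) ∂P + ∫ x, f (Smap r 2 x) ∂P) := by
  have hint : ∀ j, Integrable f (P.map (Smap r j)) := fun j ↦
    (integrable_map_measure hf.aestronglyMeasurable (Smap.measurable r j).aemeasurable).mpr
      (hP.integrable_of_continuous hr0 hr1 (hf.comp (Smap.continuous r j)))
  have hmap : ∀ j, ∫ x, f x ∂(P.map (Smap r j)) = ∫ x, f (Smap r j x) ∂P := fun j ↦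
    integral_map (Smap.measurable r j).aemeasurable hf.aestronglyMeasurable
  conv_lhs => rw [hP]
  rw [integral_smul_measure, integral_add_measure ((hint 0).add_measure (hint 1)) (hint 2),
    integral_add_measure (hint 0) (hint 1), hmap, hmap, hmap, ENNReal.toReal_inv, smul_eq_mul]
  norm_num

theorem integral_sub_half (hP : IsSmapInvariant r P) [IsProbabilityMeasure P] (hr0 : 0 < r)
    (hr1 : r < 1) : ∫ x, (x - 1 / 2) ∂P = 0 := by
  have hX := hP.integrable_of_continuous (f := fun x ↦ x - 1 / 2) hr0 hr1 (by fun_prop)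
  have h := hP.integral_eq (f := fun x ↦ x - 1 / 2) hr0 hr1 (by fun_prop)
  simp only [Smap.sub_half, integral_mul_add_s2 hX] at h
  have hsum := Smap.sum_offset r
  have : (1 - r) * ∫ x, (x - 1 / 2) ∂P = 0 := by linarith
  exact (mul_eq_zero.mp this).resolve_left (by linarith)

theorem integral_sub_half_sq (hP : IsSmapInvariant r P) [IsProbabilityMeasure P] (hr0 : 0 < r)
    (hr1 : r < 1) : ∫ x, (x - 1 / 2) ^ 2 ∂P = (1 - r) / (6 * (r + 1)) := by
  have hX := hP.integrable_of_continuous (f := fun x ↦ x - 1 / 2) hr0 hr1 (by fun_prop)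
  have hX2 := hP.integrable_of_continuous (f := fun x ↦ (x - 1 / 2) ^ 2) hr0 hr1 (by fun_prop)
  have h := hP.integral_eq (f := fun x ↦ (x - 1 / 2) ^ 2) hr0 hr1 (by fun_prop)
  simp only [Smap.sub_half, integral_mul_add_sq_s2 hX hX2, hP.integral_sub_half hr0 hr1] at h
  have hsum := Smap.sum_offset_sq r
  -- `v = r² v + (1 - r)² / 6`
  rw [eq_div_iff (by positivity)]
  nlinarith

end IsSmapInvariant

theorem stmt_2 (r : ℝ) (hr0 : 0 < r) (hr1 : r < 1/3)
    (P : Measure ℝ) [IsProbabilityMeasure P]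
    (hP : P = (3 : ℝ≥0∞)⁻¹ •
      (P.map (Smap r 0) + P.map (Smap r 1) + P.map (Smap r 2))) :
    ∀ x₀ : ℝ, ∫ x, (x - x₀)^2 ∂P = (1 - r) / (6 * (r + 1)) + (x₀ - 1/2)^2 := by
  intro x₀
  have hP' : IsSmapInvariant r P := hP
  have hr1' : r < 1 := by linarith
  have hX := hP'.integrable_of_continuous (f := fun x ↦ x - 1 / 2) hr0 hr1' (by fun_prop)
  have hX2 := hP'.integrable_of_continuous (f := fun x ↦ (x - 1 / 2) ^ 2) hr0 hr1' (by fun_prop)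
  calc ∫ x, (x - x₀) ^ 2 ∂P = ∫ x, (1 * (x - 1 / 2) + (1 / 2 - x₀)) ^ 2 ∂P := by
        congr 1; ext x; ring
    _ = _ := by
      rw [integral_mul_add_sq_s2 hX hX2, hP'.integral_sub_half hr0 hr1',
        hP'.integral_sub_half_sq hr0 hr1']
      ring
end

section
/- Let P be the self-similar measure for Sⱼ(x) = r·x + ((j−1)/2)(1−r), j = 1,2,3, with weights 1/3, where 0 < r < 1/3, and let V = (1−r)/(6(r+1)). For any word σ ∈ {1,2,3}^k (k ≥ 1) and any x₀ ∈ ℝ, ∫_{J_σ} (x−x₀)² dP(x) = 3^{−k} ( r^{2k} V + (S_σ(1/2) − x₀)² ), where J_σ = S_σ([0,1]). -/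
/-!
Everything reduces to the first two moments of `P`. Self-similarity makes the measure of
`{x | 1/2 + t < |x - 1/2|}` non-increasing under `t ↦ t / r`, so `P` lives on `[0, 1]`. Since
`r < 1/3` the three first-level cylinders are disjoint, hence `P` restricted to `S_j(A)`, `A ⊆ [0, 1]`,
is `(P|_A) ∘ S_j⁻¹ / 3`; by induction `P|_{J_σ} = 3^{-k} · S_σ P`. As `S_σ` is affine with slope `r^k`,
the integral becomes `3^{-k} ∫ (r^k x + S_σ(0) - x₀)² dP`. Finally, averaging
`S_j(x) - 1/2 = r (x - 1/2) + (j - 1)(1 - r)/2` over `j` shows that `P` has mean `1/2` and variance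
`V` with `V = r² V + (1 - r)²/6`.
-/

open MeasureTheory
open scoped ENNReal

/-- For a word `σ = σ₁ ⋯ σ_k` over the alphabet, the composition `S_σ = S_{σ₁} ∘ ⋯ ∘ S_{σ_k}`. -/
noncomputable def Sword (r : ℝ) {k : ℕ} (σ : Fin k → Fin 3) : ℝ → ℝ :=
  fun x => (List.ofFn σ).foldr (fun j y => Smap r j y) x

open Filter Topology Set Function

section WordMap

variable {ι α : Type*}

def wordMap (f : ι → α → α) (l : List ι) (x : α) : α := l.foldr f x

@[simp] theorem wordMap_nil (f : ι → α → α) : wordMap f [] = id := rfl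

@[simp] theorem wordMap_cons (f : ι → α → α) (j : ι) (l : List ι) :
    wordMap f (j :: l) = f j ∘ wordMap f l := rfl

theorem mapsTo_wordMap {f : ι → α → α} {s : Set α} (hf : ∀ i, MapsTo (f i) s s) (l : List ι) :
    MapsTo (wordMap f l) s s := by
  induction l with
  | nil => exact mapsTo_id s
  | cons j l ih => exact (hf j).comp ih

theorem measurable_wordMap [MeasurableSpace α] {f : ι → α → α} (hf : ∀ i, Measurable (f i))
    (l : List ι) : Measurable (wordMap f l) := by
  induction l with
  | nil => exact measurable_id
  | cons j l ih => exact (hf j).comp ih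

end WordMap

section SelfSimilar

variable {ι α : Type*} [Fintype ι] [MeasurableSpace α] {μ : Measure α} {p : ι → ℝ≥0∞}
  {f : ι → α → α}

theorem ae_mem_closedBall_of_eq_sum_map [PseudoMetricSpace α] [OpensMeasurableSpace α]
    [IsFiniteMeasure μ] (hμ : μ = ∑ i, p i • μ.map (f i)) (hp : ∑ i, p i = 1)
    (hf : ∀ i, Measurable (f i)) {r : ℝ} (hr0 : 0 < r) (hr1 : r < 1) {c : α} {R : ℝ}
    (hfc : ∀ i x, dist (f i x) c ≤ r * dist x c + (1 - r) * R) :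
    ∀ᵐ x ∂μ, x ∈ Metric.closedBall c R := by
  set B : ℝ → Set α := fun t => {x | R + t < dist x c}
  have hBm : ∀ t, MeasurableSet (B t) := fun t =>
    (isOpen_lt continuous_const (continuous_id.dist continuous_const)).measurableSet
  have hstep : ∀ t, μ (B (r * t)) ≤ μ (B t) := by
    intro t
    have hpre : ∀ i, f i ⁻¹' B (r * t) ⊆ B t := fun i x hx => by
      have := hfc i x
      simp only [B, mem_preimage, mem_ofPred_eq] at hx ⊢
      nlinarith
    calc μ (B (r * t)) = ∑ i, p i * μ (f i ⁻¹' B (r * t)) := by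
          conv_lhs => rw [hμ]
          simp [Measure.map_apply (hf _) (hBm _)]
      _ ≤ ∑ i, p i * μ (B t) := by gcongr with i; exact hpre i
      _ = μ (B t) := by rw [← Finset.sum_mul, hp, one_mul]
  have hiter : ∀ t (n : ℕ), μ (B t) ≤ μ (B (t * r⁻¹ ^ n)) := by
    intro t n
    induction n with
    | zero => simp
    | succ n ih =>
      have hscale : r * (t * r⁻¹ ^ (n + 1)) = t * r⁻¹ ^ n := by
        rw [pow_succ]; field_simp
      exact ih.trans (hscale ▸ hstep _)
  have hlim : Tendsto (fun t => μ (B t)) atTop (𝓝 0) := by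
    have hB : ⋂ t, B t = ∅ := by
      refine eq_empty_of_forall_notMem fun x hx => ?_
      have := mem_iInter.1 hx (dist x c - R)
      simp [B] at this
    have := tendsto_measure_iInter_atTop (μ := μ) (fun t => (hBm t).nullMeasurableSet)
      (fun s t hst x hx => by simp only [B, mem_ofPred_eq] at hx ⊢; linarith)
      ⟨0, measure_ne_top μ _⟩
    rwa [hB, measure_empty] at this
  have hnull : ∀ t, 0 < t → μ (B t) = 0 := fun t ht =>
    le_antisymm (ge_of_tendsto (hlim.comp ((tendsto_pow_atTop_atTop_of_one_lt
      (one_lt_inv₀ hr0 |>.2 hr1)).const_mul_atTop ht)) (Eventually.of_forall (hiter t))) bot_le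
  have hcover : (Metric.closedBall c R)ᶜ ⊆ ⋃ n : ℕ, B (1 / (n + 1)) := by
    intro x hx
    have hx : R < dist x c := by simpa using hx
    obtain ⟨n, hn⟩ := exists_nat_one_div_lt (sub_pos.2 hx)
    exact mem_iUnion.2 ⟨n, show R + 1 / (n + 1) < dist x c by linarith⟩
  exact measure_mono_null hcover (measure_iUnion_null fun n => hnull _ Nat.one_div_pos_of_nat)

theorem restrict_image_of_eq_sum_map (hμ : μ = ∑ i, p i • μ.map (f i))
    (hf : ∀ i, MeasurableEmbedding (f i)) {s : Set α} (hs : ∀ᵐ x ∂μ, x ∈ s)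
    (hdisj : Pairwise (Disjoint on fun i => f i '' s)) {A : Set α} (hA : A ⊆ s) (j : ι) :
    μ.restrict (f j '' A) = p j • (μ.restrict A).map (f j) := by
  have hnull : ∀ i, i ≠ j → μ (f i ⁻¹' (f j '' A)) = 0 := fun i hij =>
    measure_mono_null (fun x hx hxs => (hdisj hij).ne_of_mem (mem_image_of_mem _ hxs)
      (image_mono hA hx) rfl) hs
  conv_lhs => rw [hμ]
  rw [← Measure.restrictₗ_apply, map_sum, Finset.sum_eq_single j]
  · rw [LinearMap.map_smul, Measure.restrictₗ_apply, (hf j).restrict_map,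
      preimage_image_eq _ (hf j).injective]
  · intro i _ hij
    rw [LinearMap.map_smul, Measure.restrictₗ_apply, (hf i).restrict_map,
      Measure.restrict_eq_zero.2 (hnull i hij), Measure.map_zero, smul_zero]
  · simp

theorem restrict_image_wordMap (hμ : μ = ∑ i, p i • μ.map (f i))
    (hf : ∀ i, MeasurableEmbedding (f i)) {s : Set α} (hs : ∀ᵐ x ∂μ, x ∈ s)
    (hfs : ∀ i, MapsTo (f i) s s) (hdisj : Pairwise (Disjoint on fun i => f i '' s))
    (l : List ι) :
    μ.restrict (wordMap f l '' s) = (l.map p).prod • μ.map (wordMap f l) := by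
  induction l with
  | nil => simp [Measure.restrict_eq_self_of_ae_mem hs]
  | cons j l ih =>
    rw [wordMap_cons, image_comp, restrict_image_of_eq_sum_map hμ hf hs hdisj
      (mapsTo_wordMap hfs l).image_subset, ih, Measure.map_smul,
      Measure.map_map (hf j).measurable (measurable_wordMap (fun i => (hf i).measurable) l),
      smul_smul, List.map_cons, List.prod_cons]

theorem integral_eq_sum_integral_comp_of_eq_sum_map {G : Type*} [NormedAddCommGroup G]
    [NormedSpace ℝ G] (hμ : μ = ∑ i, p i • μ.map (f i)) (hf : ∀ i, Measurable (f i))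
    {g : α → G} (hgm : StronglyMeasurable g) (hgi : Integrable g μ) :
    ∫ x, g x ∂μ = ∑ i, (p i).toReal • ∫ x, g (f i x) ∂μ := by
  rw [hμ] at hgi
  conv_lhs => rw [hμ]
  rw [integral_finsetSum_measure fun i _ =>
    integrable_finsetSum_measure.1 hgi i (Finset.mem_univ i)]
  refine Finset.sum_congr rfl fun i _ => ?_
  rw [integral_smul_measure, integral_map (hf i).aemeasurable hgm.aestronglyMeasurable]

end SelfSimilar

theorem Continuous.integrable_of_ae_mem_compact {α E : Type*} [TopologicalSpace α]
    [MeasurableSpace α] [OpensMeasurableSpace α] [T2Space α] [NormedAddCommGroup E]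
    {μ : Measure α} [IsFiniteMeasure μ] {K : Set α} (hK : IsCompact K)
    (hμK : ∀ᵐ x ∂μ, x ∈ K) {g : α → E} (hg : Continuous g) : Integrable g μ := by
  rw [← Measure.restrict_eq_self_of_ae_mem hμK]
  exact hg.continuousOn.integrableOn_compact hK

section AffineMoments

variable {α : Type*} [MeasurableSpace α] {μ : Measure α} [IsProbabilityMeasure μ] {u : α → ℝ}

theorem integral_affine_comp (hu : Integrable u μ) (a b : ℝ) :
    ∫ x, (a * u x + b) ∂μ = a * ∫ x, u x ∂μ + b := by
  rw [integral_add (hu.const_mul _) (integrable_const _), integral_const_mul, integral_const]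
  simp

theorem integral_sq_affine_comp (hu : Integrable u μ) (hu2 : Integrable (fun x => u x ^ 2) μ)
    (a b : ℝ) :
    ∫ x, (a * u x + b) ^ 2 ∂μ = a ^ 2 * ∫ x, u x ^ 2 ∂μ + 2 * a * b * ∫ x, u x ∂μ + b ^ 2 := by
  have hexp : (fun x => (a * u x + b) ^ 2) =
      fun x => a ^ 2 * u x ^ 2 + (2 * a * b * u x + b ^ 2) := by
    funext x; ring
  have hlin : Integrable (fun x => 2 * a * b * u x + b ^ 2) μ :=
    (hu.const_mul _).add (integrable_const _)
  rw [hexp, integral_add (hu2.const_mul _) hlin,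
    integral_add (hu.const_mul _) (integrable_const _), integral_const_mul, integral_const_mul,
    integral_const]
  simp [add_assoc]

end AffineMoments

section Smap

variable {r : ℝ}

theorem Smap_sub_half (r : ℝ) (j : Fin 3) (x : ℝ) :
    Smap r j x - 1 / 2 = r * (x - 1 / 2) + ((j : ℝ) - 1) / 2 * (1 - r) := by
  unfold Smap; ring

theorem measurableEmbedding_Smap (hr : r ≠ 0) (j : Fin 3) : MeasurableEmbedding (Smap r j) :=
  (measurableEmbedding_addRight _).comp (measurableEmbedding_mulLeft₀ hr)

theorem cast_fin_three_le_two (j : Fin 3) : (j : ℝ) ≤ 2 := by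
  exact_mod_cast Nat.le_of_lt_succ j.isLt

theorem mapsTo_Smap (hr0 : 0 ≤ r) (hr1 : r ≤ 1) (j : Fin 3) :
    MapsTo (Smap r j) (Icc 0 1) (Icc 0 1) := fun x ⟨hx0, hx1⟩ => by
  have hj := cast_fin_three_le_two j
  have hj0 : (0 : ℝ) ≤ j := Nat.cast_nonneg _
  constructor <;> unfold Smap <;> nlinarith

theorem dist_Smap_half_le (hr0 : 0 ≤ r) (hr1 : r ≤ 1) (j : Fin 3) (x : ℝ) :
    dist (Smap r j x) (1 / 2) ≤ r * dist x (1 / 2) + (1 - r) * (1 / 2) := by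
  have hj : |((j : ℝ) - 1) / 2| ≤ 1 / 2 := by
    have := cast_fin_three_le_two j
    have : (0 : ℝ) ≤ j := Nat.cast_nonneg _
    rw [abs_le]; constructor <;> linarith
  rw [Real.dist_eq, Real.dist_eq, Smap_sub_half]
  calc |r * (x - 1 / 2) + ((j : ℝ) - 1) / 2 * (1 - r)|
      ≤ r * |x - 1 / 2| + |((j : ℝ) - 1) / 2| * (1 - r) := by
        refine (abs_add_le _ _).trans_eq ?_
        rw [abs_mul, abs_mul, abs_of_nonneg hr0, abs_of_nonneg (sub_nonneg.2 hr1)]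
    _ ≤ r * |x - 1 / 2| + (1 - r) * (1 / 2) := by nlinarith

theorem pairwise_disjoint_image_Smap (hr0 : 0 ≤ r) (hr1 : r < 1 / 3) :
    Pairwise (Disjoint on fun j => Smap r j '' Icc 0 1) := by
  refine pairwise_disjoint_on _ |>.2 fun i j hij => ?_
  have hij' : (i : ℝ) + 1 ≤ j := by exact_mod_cast hij
  rw [Set.disjoint_left]
  rintro _ ⟨x, hx, rfl⟩ ⟨y, hy, hxy⟩
  unfold Smap at hxy
  nlinarith [hx.1, hx.2, hy.1, hy.2, mul_nonneg hr0 hy.1, mul_nonneg hr0 (sub_nonneg.2 hx.2)]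

theorem wordMap_Smap (r : ℝ) (l : List (Fin 3)) (x : ℝ) :
    wordMap (Smap r) l x = r ^ l.length * x + wordMap (Smap r) l 0 := by
  induction l generalizing x with
  | nil => simp
  | cons j l ih =>
    simp only [wordMap_cons, Function.comp_apply, List.length_cons]
    rw [ih x, ih 0]
    unfold Smap
    ring

theorem Sword_eq_wordMap (r : ℝ) {k : ℕ} (σ : Fin k → Fin 3) :
    Sword r σ = wordMap (Smap r) (List.ofFn σ) := rfl

end Smap

section Moments

variable {r : ℝ} {P : Measure ℝ} [IsProbabilityMeasure P]

theorem ae_mem_Icc_of_eq_sum_map_Smap (hP : P = ∑ j, (3 : ℝ≥0∞)⁻¹ • P.map (Smap r j))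
    (hr0 : 0 < r) (hr1 : r < 1) : ∀ᵐ x ∂P, x ∈ Icc (0 : ℝ) 1 := by
  have hw : ∑ _j : Fin 3, (3 : ℝ≥0∞)⁻¹ = 1 := by
    simp [ENNReal.mul_inv_cancel]
  have := ae_mem_closedBall_of_eq_sum_map hP hw
    (fun j => (measurableEmbedding_Smap hr0.ne' j).measurable) hr0 hr1
    (dist_Smap_half_le hr0.le hr1.le)
  rwa [Real.closedBall_eq_Icc, sub_self, add_halves] at this

theorem integral_comp_sub_half (hP : P = ∑ j, (3 : ℝ≥0∞)⁻¹ • P.map (Smap r j))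
    (hsupp : ∀ᵐ x ∂P, x ∈ Icc (0 : ℝ) 1) {g : ℝ → ℝ} (hg : Continuous g) :
    ∫ x, g (x - 1 / 2) ∂P =
      3⁻¹ * ∑ j : Fin 3, ∫ x, g (r * (x - 1 / 2) + ((j : ℝ) - 1) / 2 * (1 - r)) ∂P := by
  have hg' : Continuous fun x : ℝ => g (x - 1 / 2) := by fun_prop
  rw [integral_eq_sum_integral_comp_of_eq_sum_map hP (fun j => by unfold Smap; fun_prop)
    hg'.stronglyMeasurable (hg'.integrable_of_ae_mem_compact isCompact_Icc hsupp),
    Finset.mul_sum]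
  simp only [Smap_sub_half, smul_eq_mul, ENNReal.toReal_inv, ENNReal.toReal_ofNat]

theorem integrable_sub_half_pow (hsupp : ∀ᵐ x ∂P, x ∈ Icc (0 : ℝ) 1) (n : ℕ) :
    Integrable (fun x : ℝ => (x - 1 / 2) ^ n) P :=
  (by fun_prop : Continuous fun x : ℝ => (x - 1 / 2) ^ n).integrable_of_ae_mem_compact
    isCompact_Icc hsupp

theorem integral_sub_half (hP : P = ∑ j, (3 : ℝ≥0∞)⁻¹ • P.map (Smap r j))
    (hsupp : ∀ᵐ x ∂P, x ∈ Icc (0 : ℝ) 1) (hr : r ≠ 1) : ∫ x, (x - 1 / 2) ∂P = 0 := by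
  have hu := integrable_sub_half_pow hsupp 1
  simp only [pow_one] at hu
  have h := integral_comp_sub_half hP hsupp continuous_id
  simp only [id, Fin.sum_univ_three, integral_affine_comp hu] at h
  norm_num at h
  have hm : (1 - r) * ∫ x, (x - 1 / 2) ∂P = 0 := by linarith
  exact (mul_eq_zero.1 hm).resolve_left (sub_ne_zero.2 hr.symm)

theorem integral_sub_half_sq (hP : P = ∑ j, (3 : ℝ≥0∞)⁻¹ • P.map (Smap r j))
    (hsupp : ∀ᵐ x ∂P, x ∈ Icc (0 : ℝ) 1) (hr0 : 0 ≤ r) (hr1 : r < 1) :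
    ∫ x, (x - 1 / 2) ^ 2 ∂P = (1 - r) / (6 * (r + 1)) := by
  have hu := integrable_sub_half_pow hsupp 1
  simp only [pow_one] at hu
  have h := integral_comp_sub_half hP hsupp (continuous_pow 2)
  simp only [Fin.sum_univ_three, integral_sq_affine_comp hu (integrable_sub_half_pow hsupp 2),
    integral_sub_half hP hsupp hr1.ne] at h
  norm_num at h
  set v := ∫ x, (x - 1 / 2) ^ 2 ∂P
  have hv : (1 - r) * (6 * (r + 1) * v - (1 - r)) = 0 := by linear_combination 6 * h
  have := (mul_eq_zero.1 hv).resolve_left (by linarith)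
  rw [eq_div_iff (by positivity)]
  linarith

theorem integral_affine_sq (hP : P = ∑ j, (3 : ℝ≥0∞)⁻¹ • P.map (Smap r j))
    (hsupp : ∀ᵐ x ∂P, x ∈ Icc (0 : ℝ) 1) (hr0 : 0 ≤ r) (hr1 : r < 1) (a b : ℝ) :
    ∫ x, (a * x + b) ^ 2 ∂P = a ^ 2 * ((1 - r) / (6 * (r + 1))) + (a / 2 + b) ^ 2 := by
  have hu := integrable_sub_half_pow hsupp 1
  simp only [pow_one] at hu
  have hcenter : ∀ x : ℝ, a * x + b = a * (x - 1 / 2) + (a / 2 + b) := fun x => by ring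
  simp_rw [hcenter]
  rw [integral_sq_affine_comp hu (integrable_sub_half_pow hsupp 2),
    integral_sub_half hP hsupp hr1.ne, integral_sub_half_sq hP hsupp hr0 hr1]
  ring

end Moments

theorem stmt_4_general (r : ℝ) (hr0 : 0 < r) (hr1 : r < 1/3)
    (P : Measure ℝ) [IsProbabilityMeasure P]
    (hP : P = (3 : ℝ≥0∞)⁻¹ •
      (P.map (Smap r 0) + P.map (Smap r 1) + P.map (Smap r 2)))
    (k : ℕ) (σ : Fin k → Fin 3) (x₀ : ℝ) :
    ∫ x in Sword r σ '' Set.Icc (0 : ℝ) 1, (x - x₀)^2 ∂P =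
      ((3 : ℝ)^k)⁻¹ * (r^(2*k) * ((1 - r) / (6 * (r + 1))) + (Sword r σ (1/2) - x₀)^2) := by
  have hr1' : r < 1 := by linarith
  have hP' : P = ∑ j, (3 : ℝ≥0∞)⁻¹ • P.map (Smap r j) := by
    rwa [Fin.sum_univ_three, ← smul_add, ← smul_add]
  have hsupp := ae_mem_Icc_of_eq_sum_map_Smap hP' hr0 hr1'
  have hemb := measurableEmbedding_Smap hr0.ne'
  have hrestrict : P.restrict (Sword r σ '' Icc 0 1) = (3 : ℝ≥0∞)⁻¹ ^ k • P.map (Sword r σ) := by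
    simpa [Sword_eq_wordMap, List.prod_ofFn] using restrict_image_wordMap hP' hemb hsupp
      (mapsTo_Smap hr0.le hr1'.le) (pairwise_disjoint_image_Smap hr0.le hr1) (List.ofFn σ)
  have hmeas : Measurable (Sword r σ) := measurable_wordMap (fun j => (hemb j).measurable) _
  have haffine : ∀ x, (Sword r σ x - x₀) ^ 2 = (r ^ k * x + (Sword r σ 0 - x₀)) ^ 2 := by
    intro x
    rw [Sword_eq_wordMap, wordMap_Smap, List.length_ofFn]
    ring
  rw [hrestrict, integral_smul_measure, integral_map hmeas.aemeasurable
    (by fun_prop : Continuous fun x : ℝ => (x - x₀) ^ 2).aestronglyMeasurable]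
  simp_rw [haffine]
  rw [integral_affine_sq hP' hsupp hr0.le hr1', ENNReal.toReal_pow, ENNReal.toReal_inv,
    ENNReal.toReal_ofNat, smul_eq_mul, inv_pow]
  ring

theorem stmt_4 (r : ℝ) (hr0 : 0 < r) (hr1 : r < 1/3)
    (P : Measure ℝ) [IsProbabilityMeasure P]
    (hP : P = (3 : ℝ≥0∞)⁻¹ •
      (P.map (Smap r 0) + P.map (Smap r 1) + P.map (Smap r 2)))
    (k : ℕ) (hk : 1 ≤ k) (σ : Fin k → Fin 3) (x₀ : ℝ) :
    ∫ x in Sword r σ '' Set.Icc (0 : ℝ) 1, (x - x₀)^2 ∂P =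
      ((3 : ℝ)^k)⁻¹ * (r^(2*k) * ((1 - r) / (6 * (r + 1))) + (Sword r σ (1/2) - x₀)^2) :=
  stmt_4_general r hr0 hr1 P hP k σ x₀
end

section
/- For r ∈ (0, 1/3), define f(r) = −(3r³ − 3r² + r − 1)/(24(r+1)) and g(r) = −(3r⁵ + 15r⁴ + 6r³ − 42r² + 31r − 13)/(240(r+1)). Then there is a unique r₀ ∈ (0, 1/3) with f(r₀) = g(r₀); moreover f(r) < g(r) for r < r₀ and f(r) > g(r) for r > r₀ in (0, 1/3), and r₀ ∈ (0.16227766, 0.16227767). -/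
/-!
Clearing the common denominator `r + 1`, the difference `g r - f r` equals
`(1 - 6 r - r²) (1 - r)² / 80`. The quadratic factor has the roots `-3 ± √10`, so on `(0, 1/3)`
the difference has the sign of `√10 - 3 - r`, and `r₀ = √10 - 3 ≈ 0.1622776601`.
-/

open Set

noncomputable def distortionBeta (r : ℝ) : ℝ :=
  -(3*r^3 - 3*r^2 + r - 1) / (24 * (r + 1))

noncomputable def distortionGamma (r : ℝ) : ℝ :=
  -(3*r^5 + 15*r^4 + 6*r^3 - 42*r^2 + 31*r - 13) / (240 * (r + 1))

lemma distortionGamma_sub_distortionBeta {r : ℝ} (hr : r + 1 ≠ 0) :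
    distortionGamma r - distortionBeta r = (1 - 6*r - r^2) * (1 - r)^2 / 80 := by
  unfold distortionGamma distortionBeta
  field_simp
  ring

lemma one_sub_six_mul_sub_sq_eq (r : ℝ) :
    1 - 6*r - r^2 = (√10 - 3 - r) * (r + 3 + √10) := by
  linear_combination (Real.sq_sqrt (show (0 : ℝ) ≤ 10 by norm_num)).symm

lemma sign_distortionGamma_sub_distortionBeta {r : ℝ} (hr : -1 < r) (hr₁ : r ≠ 1) :
    SignType.sign (distortionGamma r - distortionBeta r) = SignType.sign (√10 - 3 - r) := by
  have hpos : 0 < (r + 3 + √10) * (1 - r)^2 / 80 := by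
    have hlin : 0 < r + 3 + √10 := by linarith [Real.sqrt_nonneg 10]
    have hsq : 0 < (1 - r)^2 := sq_pos_of_ne_zero (sub_ne_zero.2 hr₁.symm)
    exact div_pos (mul_pos hlin hsq) (by norm_num)
  rw [distortionGamma_sub_distortionBeta (by linarith), one_sub_six_mul_sub_sq_eq,
    mul_assoc, mul_div_assoc, sign_mul, sign_pos hpos, mul_one]

lemma sqrt_ten_mem_Ioo : √10 ∈ Ioo (3.16227766 : ℝ) 3.16227767 :=
  ⟨(Real.lt_sqrt (by norm_num)).2 (by norm_num), (Real.sqrt_lt' (by norm_num)).2 (by norm_num)⟩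

theorem stmt_10
    (f g : ℝ → ℝ)
    (hf : ∀ r : ℝ, f r = -(3*r^3 - 3*r^2 + r - 1) / (24 * (r + 1)))
    (hg : ∀ r : ℝ, g r = -(3*r^5 + 15*r^4 + 6*r^3 - 42*r^2 + 31*r - 13) / (240 * (r + 1))) :
    ∃ r₀ ∈ Ioo (0 : ℝ) (1/3),
      f r₀ = g r₀ ∧
      (∀ r ∈ Ioo (0 : ℝ) (1/3), f r = g r → r = r₀) ∧
      (∀ r ∈ Ioo (0 : ℝ) (1/3), r < r₀ → f r < g r) ∧
      (∀ r ∈ Ioo (0 : ℝ) (1/3), r₀ < r → f r > g r) ∧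
      r₀ ∈ Ioo (0.16227766 : ℝ) 0.16227767 := by
  obtain rfl : f = distortionBeta := funext hf
  obtain rfl : g = distortionGamma := funext hg
  have hsign : ∀ r ∈ Ioo (0 : ℝ) (1/3), SignType.sign (distortionGamma r - distortionBeta r)
      = SignType.sign (√10 - 3 - r) := fun r hr =>
    sign_distortionGamma_sub_distortionBeta (by linarith [hr.1]) (by linarith [hr.2])
  obtain ⟨hlo, hhi⟩ := sqrt_ten_mem_Ioo
  have hr₀ : √10 - 3 ∈ Ioo (0 : ℝ) (1/3) := ⟨by linarith, by linarith⟩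
  refine ⟨√10 - 3, hr₀, ?_, fun r hr h => ?_, fun r hr h => ?_, fun r hr h => ?_,
    ⟨by linarith, by linarith⟩⟩
  · have := hsign _ hr₀
    rw [sub_self, sign_zero, sign_eq_zero_iff, sub_eq_zero] at this
    exact this.symm
  · have := hsign r hr
    rw [h, sub_self, sign_zero, eq_comm, sign_eq_zero_iff, sub_eq_zero] at this
    exact this.symm
  · exact sub_pos.1 (sign_eq_one_iff.1 ((hsign r hr).trans (sign_pos (by linarith))))
  · exact sub_neg.1 (sign_eq_neg_one_iff.1 ((hsign r hr).trans (sign_neg (by linarith))))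
end

section
/- For r ∈ (0, 1/3), define g(r) = −(3r⁵ + 15r⁴ + 6r³ − 42r² + 31r − 13)/(240(r+1)) and h(r) = −(3r⁷ + 15r⁶ + 60r⁵ + 66r⁴ + 18r³ − 324r² + 283r − 121)/(2184(r+1)). Then there is a unique r₁ ∈ (0, 1/3) with g(r₁) = h(r₁), and r₁ ∈ (0.23176263, 0.23176264). -/
/-!
Clearing denominators, g - h = N / (21840 (r + 1)) for a polynomial N of degree 7. Its derivative
is positive on [0, 1/3], so N has at most one root there, and N changes sign between
0.23176263 and 0.23176264, so by the intermediate value theorem the root exists and lies there.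
-/

open Set

def ghNumerator (r : ℝ) : ℝ :=
  30*r^7 + 150*r^6 + 327*r^5 - 705*r^4 - 366*r^3 + 582*r^2 + 9*r - 27

lemma hasDerivAt_ghNumerator (r : ℝ) :
    HasDerivAt ghNumerator
      (210*r^6 + 900*r^5 + 1635*r^4 - 2820*r^3 - 1098*r^2 + 1164*r + 9) r := by
  refine HasDerivAt.congr_deriv (((((((((hasDerivAt_pow 7 r).const_mul 30).add
    ((hasDerivAt_pow 6 r).const_mul 150)).add ((hasDerivAt_pow 5 r).const_mul 327)).sub
    ((hasDerivAt_pow 4 r).const_mul 705)).sub ((hasDerivAt_pow 3 r).const_mul 366)).add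
    ((hasDerivAt_pow 2 r).const_mul 582)).add ((hasDerivAt_id r).const_mul 9)).sub_const 27) ?_
  norm_num
  ring

lemma strictMonoOn_ghNumerator : StrictMonoOn ghNumerator (Icc 0 (1/3)) := by
  refine strictMonoOn_of_deriv_pos (convex_Icc 0 (1/3)) ?_ fun r hr => ?_
  · unfold ghNumerator; fun_prop
  · rw [interior_Icc] at hr
    rw [(hasDerivAt_ghNumerator r).deriv]
    have h0 := hr.1.le
    have h1 : 0 ≤ 1 - 3 * r := by linarith [hr.2]
    -- on [0, 1/3]: -2820 r³ - 1098 r² ≥ -2038 r² ≥ -(2038/3) r, which 1164 r absorbs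
    nlinarith [mul_nonneg (mul_nonneg h0 h0) h1, mul_nonneg h0 h1, pow_nonneg h0 4,
      pow_nonneg h0 5, pow_nonneg h0 6]

lemma sub_eq_ghNumerator_div (r : ℝ) :
    -(3*r^5 + 15*r^4 + 6*r^3 - 42*r^2 + 31*r - 13) / (240 * (r + 1))
      - -(3*r^7 + 15*r^6 + 60*r^5 + 66*r^4 + 18*r^3 - 324*r^2 + 283*r - 121) / (2184 * (r + 1))
      = ghNumerator r / (21840 * (r + 1)) := by
  rcases eq_or_ne (r + 1) 0 with hr | hr
  · simp [hr]
  · unfold ghNumerator; field_simp; ring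

lemma exists_ghNumerator_eq_zero : ∃ r ∈ Ioo (0.23176263 : ℝ) 0.23176264, ghNumerator r = 0 := by
  have hcont : ContinuousOn ghNumerator (Icc (0.23176263 : ℝ) 0.23176264) := by
    unfold ghNumerator; fun_prop
  exact intermediate_value_Ioo (by norm_num) hcont
    ⟨by norm_num [ghNumerator], by norm_num [ghNumerator]⟩

theorem stmt_11
    (g h : ℝ → ℝ)
    (hg : ∀ r : ℝ, g r = -(3*r^5 + 15*r^4 + 6*r^3 - 42*r^2 + 31*r - 13) / (240 * (r + 1)))
    (hh : ∀ r : ℝ, h r = -(3*r^7 + 15*r^6 + 60*r^5 + 66*r^4 + 18*r^3 - 324*r^2 + 283*r - 121)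
      / (2184 * (r + 1))) :
    ∃ r₁ ∈ Ioo (0 : ℝ) (1/3),
      g r₁ = h r₁ ∧
      (∀ r ∈ Ioo (0 : ℝ) (1/3), g r = h r → r = r₁) ∧
      r₁ ∈ Ioo (0.23176263 : ℝ) 0.23176264 := by
  have hgh : ∀ r : ℝ, 0 < r → (g r = h r ↔ ghNumerator r = 0) := fun r hr => by
    rw [← sub_eq_zero, hg, hh, sub_eq_ghNumerator_div, div_eq_zero_iff,
      or_iff_left (by positivity)]
  obtain ⟨r₁, hr₁, hroot⟩ := exists_ghNumerator_eq_zero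
  have hr₁' : r₁ ∈ Ioo (0 : ℝ) (1/3) := ⟨by linarith [hr₁.1], by linarith [hr₁.2]⟩
  refine ⟨r₁, hr₁', (hgh r₁ hr₁'.1).2 hroot, fun r hr hgr => ?_, hr₁⟩
  exact strictMonoOn_ghNumerator.injOn (Ioo_subset_Icc_self hr) (Ioo_subset_Icc_self hr₁')
    (((hgh r hr.1).1 hgr).trans hroot.symm)
end
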